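/- arXiv:math/9903028 — 3 statements merged into one kernel-verified Lean document; each statement's English description precedes it below -/
import Mathlib

section
/- Let m > 1 be an odd integer, let q ∈ ℂ be a primitive m-th root of unity, and let N ≥ 1. Then for every 0 ≤ i ≤ N−1, in F_q(N) one has Ω_i^m = Σ_{k=i}^{N−1} z_k^m (z_k^*)^m. -/
open FreeAlgebra

/-- Generators of `F_q(N)`: `Sum.inl i` is `z_i` and `Sum.inr i` is `z_i^*`. -/
abbrev FqGen (N : ℕ) : Type := Fin N ⊕ Fin N

/-- The defining relations of `F_q(N)`. -/
inductive FqRel (N : ℕ) (q : ℂ) : FreeAlgebra ℂ (FqGen N) → FreeAlgebra ℂ (FqGen N) → Prop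
  | zz (i j : Fin N) (h : i < j) :
      FqRel N q (ι ℂ (Sum.inl i) * ι ℂ (Sum.inl j))
        (q⁻¹ • (ι ℂ (Sum.inl j) * ι ℂ (Sum.inl i)))
  | ss (i j : Fin N) (h : i < j) :
      FqRel N q (ι ℂ (Sum.inr i) * ι ℂ (Sum.inr j))
        (q • (ι ℂ (Sum.inr j) * ι ℂ (Sum.inr i)))
  | zs (i j : Fin N) (h : i ≠ j) :
      FqRel N q (ι ℂ (Sum.inl i) * ι ℂ (Sum.inr j))
        (q⁻¹ • (ι ℂ (Sum.inr j) * ι ℂ (Sum.inl i)))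
  | heis (i : Fin N) :
      FqRel N q (ι ℂ (Sum.inl i) * ι ℂ (Sum.inr i) - ι ℂ (Sum.inr i) * ι ℂ (Sum.inl i))
        ((q ^ 2 - 1) • ∑ k ∈ Finset.univ.filter (fun k : Fin N => i < k),
            ι ℂ (Sum.inl k) * ι ℂ (Sum.inr k))

/-- The algebra `F_q(N)`: the quotient of the free algebra by (the two-sided ideal
generated by) the defining relations. -/
abbrev Fq (N : ℕ) (q : ℂ) : Type := RingQuot (FqRel N q)

/-- The generator `z_i` of `F_q(N)`. -/
noncomputable def zGen (N : ℕ) (q : ℂ) (i : Fin N) : Fq N q :=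
  RingQuot.mkAlgHom ℂ (FqRel N q) (ι ℂ (Sum.inl i))

/-- The generator `z_i^*` of `F_q(N)`. -/
noncomputable def zsGen (N : ℕ) (q : ℂ) (i : Fin N) : Fq N q :=
  RingQuot.mkAlgHom ℂ (FqRel N q) (ι ℂ (Sum.inr i))


/-- `Ω_i = Σ_{k ≥ i} z_k z_k^*` (so `Ω_N = 0` and `Ω = Ω_0`). -/
noncomputable def OmegaEl (N : ℕ) (q : ℂ) (i : ℕ) : Fq N q :=
  ∑ k ∈ Finset.univ.filter (fun k : Fin N => i ≤ (k : ℕ)), zGen N q k * zsGen N q k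

variable {N : ℕ} {q : ℂ}

lemma fq_zz {i j : Fin N} (h : i < j) :
    zGen N q i * zGen N q j = q⁻¹ • (zGen N q j * zGen N q i) := by
  have := RingQuot.mkAlgHom_rel ℂ (FqRel.zz (q := q) i j h)
  simpa only [zGen, map_mul, map_smul] using this

lemma fq_ss {i j : Fin N} (h : i < j) :
    zsGen N q i * zsGen N q j = q • (zsGen N q j * zsGen N q i) := by
  have := RingQuot.mkAlgHom_rel ℂ (FqRel.ss (q := q) i j h)
  simpa only [zsGen, map_mul, map_smul] using this

lemma fq_zs {i j : Fin N} (h : i ≠ j) :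
    zGen N q i * zsGen N q j = q⁻¹ • (zsGen N q j * zGen N q i) := by
  have := RingQuot.mkAlgHom_rel ℂ (FqRel.zs (q := q) i j h)
  simpa only [zGen, zsGen, map_mul, map_smul] using this

lemma fq_heis (i : Fin N) :
    zGen N q i * zsGen N q i - zsGen N q i * zGen N q i
      = (q ^ 2 - 1) • OmegaEl N q (i + 1) := by
  have := RingQuot.mkAlgHom_rel ℂ (FqRel.heis (q := q) i)
  simp only [map_sub, map_mul, map_smul, map_sum] at this
  rw [show (zGen N q i * zsGen N q i - zsGen N q i * zGen N q i : Fq N q)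
    = _ from this]
  have hfe : (Finset.univ.filter (fun k : Fin N => i < k))
      = (Finset.univ.filter (fun k : Fin N => (i : ℕ) + 1 ≤ (k : ℕ))) := by
    apply Finset.filter_congr
    intro k _
    rw [Fin.lt_iff_val_lt_val]; omega
  rw [hfe]
  rfl

section derived
variable (hq0 : q ≠ 0)

include hq0

lemma fq_flip {a b : Fq N q} (h : a = q⁻¹ • b) : b = q • a := by
  rw [h, smul_smul, mul_inv_cancel₀ hq0, one_smul]

lemma fq_zz' {i j : Fin N} (h : i < j) :
    zGen N q j * zGen N q i = q • (zGen N q i * zGen N q j) :=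
  fq_flip hq0 (fq_zz h)

lemma fq_ss' {i j : Fin N} (h : i < j) :
    zsGen N q j * zsGen N q i = q⁻¹ • (zsGen N q i * zsGen N q j) := by
  rw [fq_ss h, smul_smul, inv_mul_cancel₀ hq0, one_smul]

lemma fq_zs' {i j : Fin N} (h : i ≠ j) :
    zsGen N q j * zGen N q i = q • (zGen N q i * zsGen N q j) :=
  fq_flip hq0 (fq_zs h)

/-- `w_k z_i = q² (z_i w_k)` for `i < k`. -/
lemma fq_w_z {i k : Fin N} (h : i < k) :
    (zGen N q k * zsGen N q k) * zGen N q i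
      = (q ^ 2) • (zGen N q i * (zGen N q k * zsGen N q k)) := by
  calc (zGen N q k * zsGen N q k) * zGen N q i
      = zGen N q k * (zsGen N q k * zGen N q i) := by rw [mul_assoc]
    _ = zGen N q k * (q • (zGen N q i * zsGen N q k)) := by rw [fq_zs' hq0 h.ne]
    _ = q • ((zGen N q k * zGen N q i) * zsGen N q k) := by
        rw [mul_smul_comm, mul_assoc]
    _ = q • ((q • (zGen N q i * zGen N q k)) * zsGen N q k) := by rw [fq_zz' hq0 h]
    _ = (q ^ 2) • (zGen N q i * (zGen N q k * zsGen N q k)) := by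
        rw [smul_mul_assoc, smul_smul, sq, mul_assoc]

/-- the `w`'s commute pairwise. -/
lemma fq_w_w {i k : Fin N} (h : i < k) :
    (zGen N q i * zsGen N q i) * (zGen N q k * zsGen N q k)
      = (zGen N q k * zsGen N q k) * (zGen N q i * zsGen N q i) := by
  have h1 : (zGen N q i * zsGen N q i) * (zGen N q k * zsGen N q k)
      = q • (zGen N q i * zGen N q k * zsGen N q i * zsGen N q k) := by
    calc (zGen N q i * zsGen N q i) * (zGen N q k * zsGen N q k)
        = zGen N q i * (zsGen N q i * zGen N q k) * zsGen N q k := by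
          simp only [mul_assoc]
      _ = zGen N q i * (q • (zGen N q k * zsGen N q i)) * zsGen N q k := by
          rw [fq_zs' hq0 h.ne']
      _ = q • (zGen N q i * zGen N q k * zsGen N q i * zsGen N q k) := by
          rw [mul_smul_comm, smul_mul_assoc]; simp only [mul_assoc]
  have h2 : (zGen N q k * zsGen N q k) * (zGen N q i * zsGen N q i)
      = q • (zGen N q i * zGen N q k * zsGen N q i * zsGen N q k) := by
    calc (zGen N q k * zsGen N q k) * (zGen N q i * zsGen N q i)
        = zGen N q k * (zsGen N q k * zGen N q i) * zsGen N q i := by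
          simp only [mul_assoc]
      _ = zGen N q k * (q • (zGen N q i * zsGen N q k)) * zsGen N q i := by
          rw [fq_zs' hq0 h.ne]
      _ = q • (zGen N q k * zGen N q i * (zsGen N q k * zsGen N q i)) := by
          rw [mul_smul_comm, smul_mul_assoc]; simp only [mul_assoc]
      _ = q • ((q • (zGen N q i * zGen N q k)) * (q⁻¹ • (zsGen N q i * zsGen N q k))) := by
          rw [← fq_zz' hq0 h, ← fq_ss' hq0 h]
      _ = q • (zGen N q i * zGen N q k * zsGen N q i * zsGen N q k) := by
          rw [smul_mul_assoc, mul_smul_comm, smul_smul, smul_smul,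
            show q * q * q⁻¹ = q from by field_simp]
          simp only [mul_assoc]
  rw [h1, h2]

lemma fq_w_w' {i k : Fin N} (h : i ≠ k) :
    (zGen N q i * zsGen N q i) * (zGen N q k * zsGen N q k)
      = (zGen N q k * zsGen N q k) * (zGen N q i * zsGen N q i) := by
  rcases lt_or_gt_of_ne h with h' | h'
  · exact fq_w_w hq0 h'
  · exact (fq_w_w hq0 h').symm

lemma fq_omega_comm (a b : ℕ) :
    OmegaEl N q a * OmegaEl N q b = OmegaEl N q b * OmegaEl N q a := by
  unfold OmegaEl
  rw [Finset.sum_mul_sum, Finset.sum_mul_sum, Finset.sum_comm]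
  refine Finset.sum_congr rfl fun k _ => Finset.sum_congr rfl fun l _ => ?_
  by_cases h : l = k
  · subst h; rfl
  · exact fq_w_w' hq0 h

lemma fq_omega1_z (i : Fin N) :
    OmegaEl N q ((i : ℕ) + 1) * zGen N q i
      = (q ^ 2) • (zGen N q i * OmegaEl N q ((i : ℕ) + 1)) := by
  unfold OmegaEl
  rw [Finset.sum_mul, Finset.mul_sum, Finset.smul_sum]
  refine Finset.sum_congr rfl fun k hk => ?_
  rw [Finset.mem_filter] at hk
  exact fq_w_z hq0 (by exact Nat.lt_of_succ_le hk.2)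

end derived

lemma fq_filter_split (i : Fin N) {M : Type*} [AddCommMonoid M] (f : Fin N → M) :
    ∑ k ∈ Finset.univ.filter (fun k : Fin N => (i : ℕ) ≤ (k : ℕ)), f k
      = f i + ∑ k ∈ Finset.univ.filter (fun k : Fin N => (i : ℕ) + 1 ≤ (k : ℕ)), f k := by
  have : Finset.univ.filter (fun k : Fin N => (i : ℕ) ≤ (k : ℕ))
      = insert i (Finset.univ.filter (fun k : Fin N => (i : ℕ) + 1 ≤ (k : ℕ))) := by
    ext k
    simp only [Finset.mem_filter, Finset.mem_insert, Finset.mem_univ, true_and]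
    constructor
    · intro hk
      rcases Nat.eq_or_lt_of_le hk with h | h
      · exact Or.inl (Fin.ext h).symm
      · exact Or.inr h
    · rintro (rfl | hk)
      · exact le_refl _
      · omega
  rw [this, Finset.sum_insert (by simp)]

lemma fq_omega_split (i : Fin N) :
    OmegaEl N q (i : ℕ) = zGen N q i * zsGen N q i + OmegaEl N q ((i : ℕ) + 1) :=
  fq_filter_split i _

lemma fq_omega_z (hq0 : q ≠ 0) (i : Fin N) :
    OmegaEl N q (i : ℕ) * zGen N q i = zGen N q i * OmegaEl N q (i : ℕ) := by
  have hh := fq_heis (q := q) i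
  have h1 : zsGen N q i * zGen N q i
      = zGen N q i * zsGen N q i - (q ^ 2 - 1) • OmegaEl N q ((i : ℕ) + 1) := by
    rw [← hh, sub_sub_cancel]
  calc OmegaEl N q (i : ℕ) * zGen N q i
      = (zGen N q i * zsGen N q i + OmegaEl N q ((i : ℕ) + 1)) * zGen N q i := by
        rw [fq_omega_split]
    _ = zGen N q i * (zsGen N q i * zGen N q i)
        + (q ^ 2) • (zGen N q i * OmegaEl N q ((i : ℕ) + 1)) := by
        rw [add_mul, fq_omega1_z hq0, mul_assoc]
    _ = zGen N q i * (zGen N q i * zsGen N q i)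
        - (q ^ 2 - 1) • (zGen N q i * OmegaEl N q ((i : ℕ) + 1))
        + (q ^ 2) • (zGen N q i * OmegaEl N q ((i : ℕ) + 1)) := by
        rw [h1, mul_sub, mul_smul_comm]
    _ = zGen N q i * (zGen N q i * zsGen N q i)
        + zGen N q i * OmegaEl N q ((i : ℕ) + 1) := by
        rw [sub_add_eq_add_sub, add_sub_assoc]
        congr 1
        module
    _ = zGen N q i * OmegaEl N q (i : ℕ) := by
        rw [fq_omega_split, mul_add]

open Polynomial in
lemma nthRootsFinset_eq_image {R : Type*} [CommRing R] [IsDomain R] [DecidableEq R] {ζ : R} {m : ℕ}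
    (hm : 0 < m) (hζ : IsPrimitiveRoot ζ m) :
    nthRootsFinset m (1 : R) = (Finset.range m).image (ζ ^ ·) := by
  symm
  apply Finset.eq_of_subset_of_card_le
  · intro x hx
    simp only [Finset.mem_image, Finset.mem_range] at hx
    obtain ⟨j, hj, rfl⟩ := hx
    rw [mem_nthRootsFinset hm, ← pow_mul, mul_comm, pow_mul, hζ.pow_eq_one, one_pow]
  · rw [hζ.card_nthRootsFinset, Finset.card_image_of_injOn, Finset.card_range]
    intro a ha b hb hab
    exact hζ.pow_inj (Finset.mem_range.mp ha) (Finset.mem_range.mp hb) hab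

lemma prod_range_sub_smul {R : Type*} [CommRing R] [Algebra ℂ R] {ζ : ℂ} {m : ℕ}
    (hm : 0 < m) (hζ : IsPrimitiveRoot ζ m) (x y : R) :
    ∏ j ∈ Finset.range m, (x - ζ ^ j • y) = x ^ m - y ^ m := by
  classical
  set A := MvPolynomial (Fin 2) ℂ
  have hCinj : Function.Injective (algebraMap ℂ A) := MvPolynomial.C_injective _ _
  have hζA : IsPrimitiveRoot (algebraMap ℂ A ζ) m := hζ.map_of_injective hCinj
  have hA := hζA.pow_sub_pow_eq_prod_sub_mul (x := MvPolynomial.X 0) (y := MvPolynomial.X 1) hm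
  rw [nthRootsFinset_eq_image hm hζA, Finset.prod_image (by
      intro a ha b hb hab
      exact hζA.pow_inj (Finset.mem_range.mp ha) (Finset.mem_range.mp hb) hab)] at hA
  have := congrArg (MvPolynomial.aeval ![x, y]) hA
  rw [eq_comm]
  simpa [Algebra.smul_def, map_pow, A, MvPolynomial.algebraMap_eq, MvPolynomial.aeval_C] using this

lemma fq_step (hq0 : q ≠ 0) {m : ℕ} (hm : 0 < m)
    (hζ : IsPrimitiveRoot ((q ^ 2)⁻¹) m) (i : Fin N) :
    OmegaEl N q (i : ℕ) ^ m
      = zGen N q i ^ m * zsGen N q i ^ m + OmegaEl N q ((i : ℕ) + 1) ^ m := by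
  have hsq : (q : ℂ) ^ 2 ≠ 0 := pow_ne_zero 2 hq0
  set ζ : ℂ := (q ^ 2)⁻¹ with hζdef
  set x := OmegaEl N q (i : ℕ) with hxdef
  set y := OmegaEl N q ((i : ℕ) + 1) with hydef
  set z := zGen N q i with hzdef
  set s := zsGen N q i with hsdef
  have hxy : Commute x y := fq_omega_comm hq0 _ _
  have hf : ∀ a : Polynomial ℂ, Commute ((Polynomial.aeval y).toRingHom a) x := by
    intro a
    induction a using Polynomial.induction_on' with
    | add p r hp hr =>
        rw [map_add]
        exact hp.add_left hr
    | monomial n c =>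
        show Commute (Polynomial.aeval y (Polynomial.monomial n c)) x
        rw [Polynomial.aeval_monomial]
        exact (Algebra.commute_algebraMap_left c x).mul_left ((hxy.symm).pow_left n)
  set E : Polynomial (Polynomial ℂ) →+* Fq N q :=
    Polynomial.eval₂RingHom' (Polynomial.aeval y).toRingHom x hf with hEdef
  set f : ℕ → Polynomial (Polynomial ℂ) :=
    (fun j => Polynomial.X - ζ ^ j • Polynomial.C Polynomial.X) with hfdef
  have hEf : ∀ j : ℕ, E (f j) = x - ζ ^ j • y := by
    intro j
    simp only [hfdef, hEdef, map_sub, Polynomial.smul_C, Polynomial.eval₂RingHom'_apply,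
      Polynomial.eval₂_X, Polynomial.eval₂_C]
    rw [show ((Polynomial.aeval y).toRingHom (ζ ^ j • Polynomial.X) : Fq N q)
      = Polynomial.aeval y (ζ ^ j • Polynomial.X) from rfl, map_smul, Polynomial.aeval_X]
  have hzx : z * x = x * z := (fq_omega_z hq0 i).symm
  have hzy : z * y = ζ • (y * z) := by
    rw [fq_omega1_z hq0 i, smul_smul, hζdef, inv_mul_cancel₀ hsq, one_smul]
  have hstep : ∀ c : ℂ, z * (x - c • y) = (x - (ζ * c) • y) * z := by
    intro c
    rw [mul_sub, mul_smul_comm, hzx, hzy, smul_smul, mul_comm c ζ, sub_mul, smul_mul_assoc]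
  have hshift : ∀ k : ℕ, z * E (∏ j ∈ Finset.range k, f j)
      = E (∏ j ∈ Finset.range k, f (j + 1)) * z := by
    intro k
    induction k with
    | zero => simp
    | succ k ih =>
        rw [Finset.prod_range_succ, Finset.prod_range_succ, map_mul, map_mul, ← mul_assoc,
          ih, mul_assoc, hEf, hstep, hEf, ← pow_succ', ← mul_assoc]
  have hzs : z * s = x - y := by
    rw [hxdef, fq_omega_split i, ← hzdef, ← hsdef, ← hydef, add_sub_cancel_right]
  have hmain : ∀ k : ℕ, z ^ k * s ^ k = E (∏ j ∈ Finset.range k, f j) := by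
    intro k
    induction k with
    | zero => simp
    | succ k ih =>
        rw [pow_succ' z, pow_succ s]
        calc z * z ^ k * (s ^ k * s)
            = z * (z ^ k * s ^ k) * s := by simp only [mul_assoc]
          _ = z * E (∏ j ∈ Finset.range k, f j) * s := by rw [ih]
          _ = E (∏ j ∈ Finset.range k, f (j + 1)) * (z * s) := by
              rw [hshift, mul_assoc]
          _ = E (∏ j ∈ Finset.range k, f (j + 1)) * E (f 0) := by
              rw [hzs, hEf, pow_zero, one_smul]
          _ = E (∏ j ∈ Finset.range (k + 1), f j) := by
              rw [← map_mul, Finset.prod_range_succ']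
  have hB : (∏ j ∈ Finset.range m, f j)
      = Polynomial.X ^ m - (Polynomial.C Polynomial.X) ^ m :=
    prod_range_sub_smul hm hζ _ _
  have hfin := hmain m
  rw [hB, map_sub, map_pow, map_pow] at hfin
  have hEX : E Polynomial.X = x := Polynomial.eval₂_X _ _
  have hEY : E (Polynomial.C Polynomial.X) = y := by
    rw [hEdef, Polynomial.eval₂RingHom'_apply, Polynomial.eval₂_C]
    exact Polynomial.aeval_X y
  rw [hEX, hEY] at hfin
  rw [hfin, sub_add_cancel]

lemma fq_filter_split' {i0 : ℕ} (h : i0 < N) {M : Type*} [AddCommMonoid M] (f : Fin N → M) :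
    ∑ k ∈ Finset.univ.filter (fun k : Fin N => i0 ≤ (k : ℕ)), f k
      = f ⟨i0, h⟩ + ∑ k ∈ Finset.univ.filter (fun k : Fin N => i0 + 1 ≤ (k : ℕ)), f k := by
  simpa using fq_filter_split (N := N) ⟨i0, h⟩ f

lemma fq_omega_zero {i0 : ℕ} (h : N ≤ i0) : OmegaEl N q i0 = 0 := by
  unfold OmegaEl
  rw [Finset.filter_false_of_mem, Finset.sum_empty]
  intro k _
  have := k.isLt
  omega


/-- For `q` a primitive `m`-th root of unity with `m > 1` odd,
`Ω_i^m = Σ_{k=i}^{N−1} z_k^m (z_k^*)^m`. -/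
theorem fq_Omega_pow_m (N : ℕ) (hN : 1 ≤ N) (m : ℕ) (hm : Odd m) (hm1 : 1 < m)
    (q : ℂ) (hq : IsPrimitiveRoot q m) :
    ∀ i : Fin N,
      OmegaEl N q i ^ m =
        ∑ k ∈ Finset.univ.filter (fun k : Fin N => (i : ℕ) ≤ (k : ℕ)),
          zGen N q k ^ m * zsGen N q k ^ m := by
  have hm0 : 0 < m := by omega
  have hq0 : q ≠ 0 := hq.ne_zero (by omega)
  have h2 : IsPrimitiveRoot (q ^ 2) m := hq.pow_of_coprime 2 (Nat.coprime_two_left.mpr hm)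
  have hζ : IsPrimitiveRoot ((q ^ 2)⁻¹) m := h2.inv
  have hbase : ∀ i0 : ℕ, N ≤ i0 →
      OmegaEl N q i0 ^ m = ∑ k ∈ Finset.univ.filter (fun k : Fin N => i0 ≤ (k : ℕ)),
        zGen N q k ^ m * zsGen N q k ^ m := by
    intro i0 h
    rw [fq_omega_zero h, zero_pow (by omega), Finset.filter_false_of_mem, Finset.sum_empty]
    intro k _
    have := k.isLt
    omega
  have aux : ∀ d i0 : ℕ, N ≤ i0 + d →
      OmegaEl N q i0 ^ m = ∑ k ∈ Finset.univ.filter (fun k : Fin N => i0 ≤ (k : ℕ)),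
        zGen N q k ^ m * zsGen N q k ^ m := by
    intro d
    induction d with
    | zero => intro i0 h; exact hbase i0 (by omega)
    | succ d ih =>
        intro i0 h
        by_cases hiN : N ≤ i0
        · exact hbase i0 hiN
        · push_neg at hiN
          have h1 := fq_step hq0 hm0 hζ ⟨i0, hiN⟩
          rw [show (OmegaEl N q i0) = OmegaEl N q ((⟨i0, hiN⟩ : Fin N) : ℕ) from rfl, h1,
            ih (i0 + 1) (by omega),
            fq_filter_split' hiN (fun k => zGen N q k ^ m * zsGen N q k ^ m)]
  intro i
  exact aux N (i : ℕ) (by omega)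
end

section
/- Let m > 1 be an odd integer and ε ∈ ℂ a primitive m-th root of unity. Viewing each Laurent polynomial d_{m,j}(m) as a function of q ∈ ℂ \ {0}, one has lim_{q→ε} d_{m,j}(m)(q) / (m (q^m − 1)) = 0 for every j = 1,…,m−1, and lim_{q→ε} d_{m,m}(m)(q) / (m (q^m − 1)) = 2. -/
open Filter

/-- The coefficients `c_{i,j}` (the Laurent polynomials of the paper, viewed as functions
of `q`): `c_{i,0} = 1`, `c_{0,j} = 0` for `j ≥ 1`, and
`c_{i+1,j} = q^{−2j} c_{i,j} + q^{−2(j−1)} c_{i,j−1}`. -/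
noncomputable def cCoef (q : ℂ) : ℕ → ℕ → ℂ
  | _, 0 => 1
  | 0, _ + 1 => 0
  | i + 1, j + 1 => (q ^ (2 * (j + 1)))⁻¹ * cCoef q i (j + 1) + (q ^ (2 * j))⁻¹ * cCoef q i j

/-- `d_{i,j}(s) = (q^{2s} − 1)(q^{2(s−1)} − 1) ⋯ (q^{2(s+1−j)} − 1) c_{i,j}`. -/
noncomputable def dCoef (q : ℂ) (i j s : ℕ) : ℂ :=
  (∏ t ∈ Finset.range j, (q ^ (2 * (s - t)) - 1)) * cCoef q i j

open Polynomial in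
lemma prod_range_X_sub_aux {n : ℕ} (hn : 0 < n) {ζ : ℂ} (hζ : IsPrimitiveRoot ζ n) :
    ∏ k ∈ Finset.range n, (X - C (ζ ^ k)) = X ^ n - 1 := by
  have hmonic : (X ^ n - C (1 : ℂ)).Monic := monic_X_pow_sub_C 1 hn.ne'
  have hcard : Multiset.card (X ^ n - C (1 : ℂ)).roots = (X ^ n - C (1 : ℂ)).natDegree := by
    rw [natDegree_X_pow_sub_C, ← nthRoots, hζ.card_nthRoots_one]
  have h := prod_multiset_X_sub_C_of_monic_of_roots_card_eq hmonic hcard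
  have hroots : (X ^ n - C (1 : ℂ)).roots = (Multiset.range n).map (fun k => ζ ^ k) := by
    rw [← nthRoots, hζ.nthRoots_eq (one_pow n)]
    simp
  rw [hroots, Multiset.map_map] at h
  rw [map_one] at h
  rw [← h, Finset.prod_eq_multiset_prod, Finset.range_val]
  rfl

lemma prod_range_eval_aux {n : ℕ} (hn : 0 < n) {ζ : ℂ} (hζ : IsPrimitiveRoot ζ n) (w : ℂ) :
    ∏ k ∈ Finset.range n, (w - ζ ^ k) = w ^ n - 1 := by
  have h := congrArg (Polynomial.eval w) (prod_range_X_sub_aux hn hζ)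
  simpa [Polynomial.eval_prod] using h

open Polynomial in
lemma prod_Ico_one_sub_aux {n : ℕ} (hn : 1 < n) {ζ : ℂ} (hζ : IsPrimitiveRoot ζ n) :
    ∏ t ∈ Finset.Ico 1 n, (1 - ζ ^ t) = (n : ℂ) := by
  have h1 : (X - C (1 : ℂ)) * ∏ t ∈ Finset.Ico 1 n, (X - C (ζ ^ t)) = X ^ n - 1 := by
    rw [← prod_range_X_sub_aux (show 0 < n by omega) hζ, Finset.range_eq_Ico,
      Finset.prod_eq_prod_Ico_succ_bot (show 0 < n by omega) (fun k => X - C (ζ ^ k))]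
    simp
  have h2 : (X - C (1 : ℂ)) * ∑ i ∈ Finset.range n, (X : ℂ[X]) ^ i = X ^ n - 1 := by
    rw [map_one, mul_comm, geom_sum_mul]
  have h3 : ∏ t ∈ Finset.Ico 1 n, (X - C (ζ ^ t)) = ∑ i ∈ Finset.range n, (X : ℂ[X]) ^ i :=
    mul_left_cancel₀ (X_sub_C_ne_zero (1 : ℂ)) (h1.trans h2.symm)
  have h4 := congrArg (eval 1) h3
  simpa [eval_prod, eval_finset_sum] using h4

lemma prod_Ico_sub_one_aux {n : ℕ} (hn : 1 < n) (hodd : Odd n) {ζ : ℂ}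
    (hζ : IsPrimitiveRoot ζ n) : ∏ t ∈ Finset.Ico 1 n, (ζ ^ t - 1) = (n : ℂ) := by
  have h : ∀ t ∈ Finset.Ico 1 n, (ζ ^ t - 1) = -1 * (1 - ζ ^ t) := fun t _ => by ring
  rw [Finset.prod_congr rfl h, Finset.prod_mul_distrib, Finset.prod_const,
    prod_Ico_one_sub_aux hn hζ, Nat.card_Ico]
  have heven : Even (n - 1) := Nat.Odd.sub_odd hodd odd_one
  rw [heven.neg_one_pow, one_mul]

lemma cCoef_eq_zero_aux (q : ℂ) : ∀ i j, i < j → cCoef q i j = 0 := by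
  intro i
  induction i with
  | zero => intro j hj; match j, hj with | j + 1, _ => simp [cCoef]
  | succ i ih =>
    intro j hj
    match j, hj with
    | j + 1, hj =>
      simp only [cCoef]
      rw [ih (j + 1) (by omega), ih j (by omega)]
      ring

lemma cCoef_continuousAt_aux {q : ℂ} (hq : q ≠ 0) : ∀ i j, ContinuousAt (fun x : ℂ => cCoef x i j) q := by
  intro i
  induction i with
  | zero => intro j; cases j <;> simp [cCoef] <;> exact continuousAt_const
  | succ i ih =>
    intro j
    cases j with
    | zero => simp only [cCoef]; exact continuousAt_const
    | succ j =>
      simp only [cCoef]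
      exact (((continuousAt_pow _ _).inv₀ (pow_ne_zero _ hq)).mul (ih _)).add
        (((continuousAt_pow _ _).inv₀ (pow_ne_zero _ hq)).mul (ih _))

lemma sum_cCoef_aux (q : ℂ) (i : ℕ) (z : ℂ) :
    ∑ j ∈ Finset.range (i + 1), cCoef q i j * z ^ j
      = ∏ k ∈ Finset.range i, (1 + (q ^ (2 * k))⁻¹ * z) := by
  induction i generalizing z with
  | zero => simp [cCoef]
  | succ i ih =>
    rw [Finset.prod_range_succ']
    have key : ∀ k, (q ^ (2 * (k + 1)))⁻¹ * z = (q ^ (2 * k))⁻¹ * ((q ^ 2)⁻¹ * z) := by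
      intro k
      rw [mul_add 2 k 1, pow_add, mul_inv]
      ring
    have h2 : ∏ k ∈ Finset.range i, (1 + (q ^ (2 * (k + 1)))⁻¹ * z)
        = ∑ j ∈ Finset.range (i + 1), cCoef q i j * ((q ^ 2)⁻¹ * z) ^ j := by
      rw [ih ((q ^ 2)⁻¹ * z)]
      exact Finset.prod_congr rfl fun k _ => by rw [key k]
    rw [h2]
    rw [Finset.sum_range_succ' (fun j => cCoef q (i + 1) j * z ^ j) (i + 1)]
    simp only [cCoef, pow_zero, mul_one]
    have expand : ∑ j ∈ Finset.range (i + 1),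
        ((q ^ (2 * (j + 1)))⁻¹ * cCoef q i (j + 1) + (q ^ (2 * j))⁻¹ * cCoef q i j) * z ^ (j + 1)
        = (∑ j ∈ Finset.range (i + 1), (q ^ (2 * (j + 1)))⁻¹ * cCoef q i (j + 1) * z ^ (j + 1))
          + ∑ j ∈ Finset.range (i + 1), (q ^ (2 * j))⁻¹ * cCoef q i j * z ^ (j + 1) := by
      rw [← Finset.sum_add_distrib]; congr 1; funext j; ring
    rw [expand]
    have h3 : (∑ j ∈ Finset.range (i + 1), (q ^ (2 * (j + 1)))⁻¹ * cCoef q i (j + 1) * z ^ (j + 1)) + 1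
        = ∑ j ∈ Finset.range (i + 2), (q ^ (2 * j))⁻¹ * cCoef q i j * z ^ j := by
      rw [Finset.sum_range_succ' (fun j => (q ^ (2 * j))⁻¹ * cCoef q i j * z ^ j) (i + 1)]
      simp [cCoef]
    have h4 : ∑ j ∈ Finset.range (i + 2), (q ^ (2 * j))⁻¹ * cCoef q i j * z ^ j
        = ∑ j ∈ Finset.range (i + 1), (q ^ (2 * j))⁻¹ * cCoef q i j * z ^ j := by
      rw [Finset.sum_range_succ, cCoef_eq_zero_aux q i (i + 1) (by omega)]
      ring
    have goal : ∀ A B : ℂ, (A + B + 1 : ℂ) = (A + 1) + B := by intros; ring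
    rw [goal, h3, h4]
    have h6 : ∀ j : ℕ, ((q ^ 2)⁻¹ * z) ^ j = (q ^ (2 * j))⁻¹ * z ^ j := by
      intro j; rw [mul_pow, inv_pow, ← pow_mul]
    rw [Finset.sum_mul, ← Finset.sum_add_distrib]
    exact Finset.sum_congr rfl fun j _ => by rw [h6 j]; ring

lemma prod_one_add_aux {n : ℕ} (hn : 0 < n) (hodd : Odd n) {ζ : ℂ} (hζ : IsPrimitiveRoot ζ n)
    (z : ℂ) : ∏ k ∈ Finset.range n, (1 + ζ ^ k * z) = 1 + z ^ n := by
  rcases eq_or_ne z 0 with rfl | hz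
  · simp [zero_pow hn.ne']
  · have hfac : ∀ k ∈ Finset.range n, (1 + ζ ^ k * z) = -z * (-z⁻¹ - ζ ^ k) := by
      intro k _
      field_simp
      ring
    rw [Finset.prod_congr rfl hfac, Finset.prod_mul_distrib, Finset.prod_const,
      Finset.card_range, prod_range_eval_aux hn hζ, hodd.neg_pow, hodd.neg_pow, inv_pow]
    have hzn : z ^ n ≠ 0 := pow_ne_zero _ hz
    field_simp
    ring

open Polynomial in
lemma cCoef_eval_aux {m : ℕ} (hm1 : 1 < m) (hodd : Odd m) {ε : ℂ} (hε : IsPrimitiveRoot ε m) :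
    (∀ j, 1 ≤ j → j ≤ m - 1 → cCoef ε m j = 0) ∧ cCoef ε m m = 1 := by
  have hζ : IsPrimitiveRoot ((ε ^ 2)⁻¹) m :=
    (hε.pow_of_coprime 2 (Nat.coprime_two_left.mpr hodd)).inv
  have hkey : ∀ k : ℕ, (ε ^ (2 * k))⁻¹ = ((ε ^ 2)⁻¹) ^ k := by
    intro k; rw [pow_mul, inv_pow]
  have hsum : ∀ z : ℂ, ∑ j ∈ Finset.range (m + 1), cCoef ε m j * z ^ j = 1 + z ^ m := by
    intro z
    rw [sum_cCoef_aux, Finset.prod_congr rfl (fun k _ => by rw [hkey k])]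
    exact prod_one_add_aux (by omega) hodd hζ z
  set P : ℂ[X] := ∑ j ∈ Finset.range (m + 1), C (cCoef ε m j) * X ^ j with hP
  have hPQ : P = 1 + X ^ m := by
    apply Polynomial.funext
    intro r
    have : P.eval r = ∑ j ∈ Finset.range (m + 1), cCoef ε m j * r ^ j := by
      rw [hP, eval_finset_sum]
      simp
    rw [this, hsum r]
    simp
  have hcoeff : ∀ j, j ≤ m → cCoef ε m j = P.coeff j := by
    intro j hj
    rw [hP, finset_sum_coeff]
    simp only [coeff_C_mul, coeff_X_pow, mul_ite, mul_one, mul_zero]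
    rw [Finset.sum_ite_eq (Finset.range (m + 1)) j]
    rw [if_pos (Finset.mem_range.mpr (by omega))]
  constructor
  · intro j hj1 hj2
    rw [hcoeff j (by omega), hPQ, coeff_add, coeff_one, coeff_X_pow,
      if_neg (by omega), if_neg (by omega), add_zero]
  · rw [hcoeff m le_rfl, hPQ, coeff_add, coeff_one, coeff_X_pow,
      if_neg (by omega), if_pos rfl, zero_add]

/-- `lim_{q→ε} d_{m,j}(m)/(m(q^m−1)) = 0` for `1 ≤ j ≤ m−1`, and the limit is `2` for `j = m`. -/
theorem dCoef_limits (m : ℕ) (hm : Odd m) (hm1 : 1 < m) (ε : ℂ)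
    (hε : IsPrimitiveRoot ε m) :
    (∀ j : ℕ, 1 ≤ j → j ≤ m - 1 →
      Tendsto (fun q : ℂ => dCoef q m j m / ((m : ℂ) * (q ^ m - 1)))
        (nhdsWithin ε {q : ℂ | q ^ m ≠ 1}) (nhds 0)) ∧
    Tendsto (fun q : ℂ => dCoef q m m m / ((m : ℂ) * (q ^ m - 1)))
      (nhdsWithin ε {q : ℂ | q ^ m ≠ 1}) (nhds 2) := by
  have hεm : ε ^ m = 1 := hε.pow_eq_one
  have hε0 : ε ≠ 0 := by
    intro h
    rw [h, zero_pow (by omega : m ≠ 0)] at hεm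
    exact zero_ne_one hεm
  have hmc : (m : ℂ) ≠ 0 := Nat.cast_ne_zero.mpr (by omega)
  obtain ⟨hc0, hc1⟩ := cCoef_eval_aux hm1 hm hε
  have key : ∀ j : ℕ, 1 ≤ j → j ≤ m →
      Tendsto (fun q : ℂ => dCoef q m j m / ((m : ℂ) * (q ^ m - 1)))
        (nhdsWithin ε {q : ℂ | q ^ m ≠ 1})
        (nhds ((ε ^ m + 1) * (∏ t ∈ Finset.Ico 1 j, (ε ^ (2 * (m - t)) - 1))
          * cCoef ε m j / m)) := by
    intro j hj1 hjm
    set g : ℂ → ℂ := fun q =>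
      (q ^ m + 1) * (∏ t ∈ Finset.Ico 1 j, (q ^ (2 * (m - t)) - 1)) * cCoef q m j / m with hgdef
    have hgc : ContinuousAt g ε := by
      apply ContinuousAt.div_const
      exact ((((continuous_pow m).add continuous_const).continuousAt).mul
        ((continuous_finset_prod _ fun t _ =>
          (continuous_pow _).sub continuous_const).continuousAt)).mul
        (cCoef_continuousAt_aux hε0 m j)
    have hgl : Tendsto g (nhdsWithin ε {q : ℂ | q ^ m ≠ 1}) (nhds (g ε)) :=
      hgc.continuousWithinAt
    refine Tendsto.congr' ?_ hgl
    filter_upwards [self_mem_nhdsWithin] with q hq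
    have hq1 : q ^ m - 1 ≠ 0 := sub_ne_zero.mpr hq
    have hsplit : ∏ t ∈ Finset.range j, (q ^ (2 * (m - t)) - 1)
        = ((q ^ m - 1) * (q ^ m + 1)) * ∏ t ∈ Finset.Ico 1 j, (q ^ (2 * (m - t)) - 1) := by
      rw [Finset.range_eq_Ico,
        Finset.prod_eq_prod_Ico_succ_bot (show 0 < j by omega)
          (fun t => q ^ (2 * (m - t)) - 1)]
      have h0 : q ^ (2 * (m - 0)) - 1 = (q ^ m - 1) * (q ^ m + 1) := by
        rw [Nat.sub_zero, mul_comm 2 m, pow_mul]; ring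
      rw [h0]
    show g q = dCoef q m j m / ((m : ℂ) * (q ^ m - 1))
    rw [hgdef]
    simp only [dCoef, hsplit]
    field_simp
  constructor
  · intro j hj1 hj2
    have h := key j hj1 (by omega)
    rw [hc0 j hj1 hj2] at h
    simpa using h
  · have h := key m (by omega) le_rfl
    rw [hc1, hεm] at h
    have hζ : IsPrimitiveRoot ((ε ^ 2)⁻¹) m :=
      (hε.pow_of_coprime 2 (Nat.coprime_two_left.mpr hm)).inv
    have hterm : ∀ t ∈ Finset.Ico 1 m, ε ^ (2 * (m - t)) - 1 = ((ε ^ 2)⁻¹) ^ t - 1 := by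
      intro t ht
      rw [Finset.mem_Ico] at ht
      congr 1
      have h1 : (2 * (m - t)) + 2 * t = 2 * m := by omega
      calc ε ^ (2 * (m - t))
          = ε ^ (2 * (m - t)) * (ε ^ (2 * t) * (ε ^ (2 * t))⁻¹) := by
            rw [mul_inv_cancel₀ (pow_ne_zero _ hε0), mul_one]
        _ = ε ^ (2 * m) * (ε ^ (2 * t))⁻¹ := by rw [← mul_assoc, ← pow_add, h1]
        _ = ((ε ^ 2)⁻¹) ^ t := by
            rw [mul_comm 2 m, pow_mul, hεm, one_pow, one_mul, inv_pow, ← pow_mul]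
    have hval : ((1 : ℂ) + 1) * (∏ t ∈ Finset.Ico 1 m, (ε ^ (2 * (m - t)) - 1)) * 1 / m
        = 2 := by
      rw [Finset.prod_congr rfl hterm, prod_Ico_sub_one_aux hm1 hm hζ]
      field_simp
      ring
    rwa [hval] at h
end

section
/- For an integer x ≥ 1 let M_x be the x×x integer matrix whose (i,j) entry is 1 if i > j, −1 if i < j, and 0 if i = j. If x is even, there exists W ∈ SL(x, ℤ) such that W M_x Wᵀ is the block diagonal matrix with x/2 consecutive 2×2 diagonal blocks equal to S(1). If x is odd, there exists W ∈ SL(x, ℤ) such that W M_x Wᵀ is the block diagonal matrix with (x−1)/2 consecutive 2×2 diagonal blocks equal to S(1) followed by a 1×1 zero block. -/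
/-- The `x×x` skew-symmetric matrix with `(i,j)` entry `1` if `i > j`, `−1` if `i < j`,
`0` if `i = j`. -/
def Mmat (x : ℕ) : Matrix (Fin x) (Fin x) ℤ :=
  Matrix.of fun i j => if j < i then 1 else if i < j then -1 else 0

/-- Block diagonal matrix whose `t`-th consecutive `2×2` diagonal block is
`S(d t) = !![0, -d t; d t, 0]`; a leftover final index (when `n` is odd) gives a
`1×1` zero block. -/
def blockS (n : ℕ) (d : ℕ → ℤ) : Matrix (Fin n) (Fin n) ℤ :=
  Matrix.of fun i j =>
    if (i : ℕ) % 2 = 0 ∧ (j : ℕ) = (i : ℕ) + 1 then -d ((i : ℕ) / 2)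
    else if (j : ℕ) % 2 = 0 ∧ (i : ℕ) = (j : ℕ) + 1 then d ((j : ℕ) / 2)
    else 0

/-!
Split off the first two coordinates: `M_{n+2}` has diagonal blocks `S(1)` and `M_n`, and its
off-diagonal blocks are constant (`-1` above, `1` below). Congruence by the unipotent matrix
`[[1, 0], [E, 1]]`, where every row of `E` is `(1, -1)`, clears both off-diagonal blocks and
leaves `M_n` unchanged because `E` kills the constant block. Induction in steps of two then
finishes, with `M_0` and `M_1 = 0` as base cases.
-/

open Matrix

namespace Matrix

variable {m n R : Type*} [Fintype m] [DecidableEq m] [Fintype n] [DecidableEq n] [CommRing R]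

def SLCongr (A B : Matrix n n R) : Prop :=
  ∃ W : Matrix n n R, W.det = 1 ∧ W * A * Wᵀ = B

theorem SLCongr.refl (A : Matrix n n R) : SLCongr A A :=
  ⟨1, det_one, by simp⟩

theorem SLCongr.trans {A B C : Matrix n n R} : SLCongr A B → SLCongr B C → SLCongr A C := by
  rintro ⟨V, hV, rfl⟩ ⟨W, hW, rfl⟩
  exact ⟨W * V, by rw [det_mul, hV, hW, one_mul], by simp only [transpose_mul, Matrix.mul_assoc]⟩

theorem SLCongr.of_submatrix {A B : Matrix n n R} (e : m ≃ n)
    (h : SLCongr (A.submatrix e e) (B.submatrix e e)) : SLCongr A B := by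
  obtain ⟨W, hW, hWAB⟩ := h
  refine ⟨W.submatrix e.symm e.symm, by rw [det_submatrix_equiv_self, hW], ?_⟩
  have hA : A = (A.submatrix e e).submatrix e.symm e.symm := by simp
  rw [hA, transpose_submatrix, submatrix_mul_equiv, submatrix_mul_equiv, hWAB]
  simp

theorem SLCongr.fromBlocks_diag {A A' : Matrix m m R} {D D' : Matrix n n R}
    (hA : SLCongr A A') (hD : SLCongr D D') :
    SLCongr (fromBlocks A 0 0 D) (fromBlocks A' 0 0 D') := by
  obtain ⟨V, hV, rfl⟩ := hA
  obtain ⟨W, hW, rfl⟩ := hD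
  refine ⟨fromBlocks V 0 0 W, by rw [det_fromBlocks_zero₁₂, hV, hW, one_mul], ?_⟩
  simp [fromBlocks_transpose, fromBlocks_multiply]

theorem slCongr_fromBlocks_clear {A : Matrix m m R} {B : Matrix m n R} {C : Matrix n m R}
    {D : Matrix n n R} (E : Matrix n m R) (hC : E * A = -C) (hB : A * Eᵀ = -B) :
    SLCongr (fromBlocks A B C D) (fromBlocks A 0 0 (E * B + D)) := by
  refine ⟨fromBlocks 1 0 E 1, by simp, ?_⟩
  simp [fromBlocks_transpose, fromBlocks_multiply, hC, hB]

end Matrix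

theorem Mmat_two : Mmat 2 = !![0, -1; 1, 0] := by
  ext i j
  fin_cases i <;> fin_cases j <;> rfl

theorem Mmat_add_submatrix_finSumFinEquiv (m n : ℕ) :
    (Mmat (m + n)).submatrix finSumFinEquiv finSumFinEquiv =
      fromBlocks (Mmat m) (of fun _ _ => -1) (of fun _ _ => 1) (Mmat n) := by
  ext (i | i) (j | j) <;>
    simp only [submatrix_apply, finSumFinEquiv_apply_left, finSumFinEquiv_apply_right,
      fromBlocks_apply₁₁, fromBlocks_apply₁₂, fromBlocks_apply₂₁, fromBlocks_apply₂₂, Mmat,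
      of_apply, Fin.lt_def, Fin.val_castAdd, Fin.val_natAdd] <;>
    split_ifs <;> omega

theorem blockS_two_add_submatrix_finSumFinEquiv (n : ℕ) (d : ℕ → ℤ) :
    (blockS (2 + n) d).submatrix finSumFinEquiv finSumFinEquiv =
      fromBlocks !![0, -d 0; d 0, 0] 0 0 (blockS n fun t => d (t + 1)) := by
  ext (i | i) (j | j)
  · fin_cases i <;> fin_cases j <;> simp [blockS]
  all_goals
    simp only [submatrix_apply, finSumFinEquiv_apply_left, finSumFinEquiv_apply_right,
      fromBlocks_apply₁₂, fromBlocks_apply₂₁, fromBlocks_apply₂₂, blockS, of_apply,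
      Fin.val_castAdd, Fin.val_natAdd, Matrix.zero_apply]
    split_ifs <;> first | rfl | omega | congr 2; omega

theorem slCongr_Mmat_blockS (n : ℕ) : SLCongr (Mmat n) (blockS n fun _ => 1) := by
  induction n using Nat.twoStepInduction with
  | zero => exact Subsingleton.elim (Mmat 0) (blockS 0 _) ▸ SLCongr.refl _
  | one =>
    have : Mmat 1 = blockS 1 fun _ => 1 := by ext i j; fin_cases i; fin_cases j; rfl
    exact this ▸ SLCongr.refl _
  | more n ih _ =>
    rw [Nat.add_comm n 2]
    apply SLCongr.of_submatrix finSumFinEquiv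
    rw [Mmat_add_submatrix_finSumFinEquiv, blockS_two_add_submatrix_finSumFinEquiv]
    set E : Matrix (Fin n) (Fin 2) ℤ := of fun _ => ![1, -1]
    have hC : E * Mmat 2 = -of fun _ _ => 1 := by
      ext i j; fin_cases j <;> simp [E, Mmat_two, mul_apply, Fin.sum_univ_two]
    have hB : Mmat 2 * Eᵀ = -of fun _ _ => -1 := by
      ext i j; fin_cases i <;> simp [E, Mmat_two, mul_apply, Fin.sum_univ_two]
    have hEB : E * (of fun _ _ => -1 : Matrix (Fin 2) (Fin n) ℤ) = 0 := by
      ext i j; simp [E, mul_apply, Fin.sum_univ_two]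
    refine (slCongr_fromBlocks_clear E hC hB).trans ?_
    rw [hEB, zero_add, Mmat_two]
    exact (SLCongr.refl _).fromBlocks_diag ih

theorem Mmat_canonical_form_general (x : ℕ) :
    (Even x → ∃ W : Matrix (Fin x) (Fin x) ℤ, W.det = 1 ∧
        W * Mmat x * W.transpose = blockS x (fun _ => 1)) ∧
    (Odd x → ∃ W : Matrix (Fin x) (Fin x) ℤ, W.det = 1 ∧
        W * Mmat x * W.transpose = blockS x (fun _ => 1)) :=
  ⟨fun _ => slCongr_Mmat_blockS x, fun _ => slCongr_Mmat_blockS x⟩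

/-- `M_x` is `SL(x,ℤ)`-congruent to the block diagonal matrix with `⌊x/2⌋` blocks `S(1)`
(for odd `x`, followed by a `1×1` zero block). -/
theorem Mmat_canonical_form (x : ℕ) (hx : 1 ≤ x) :
    (Even x → ∃ W : Matrix (Fin x) (Fin x) ℤ, W.det = 1 ∧
        W * Mmat x * W.transpose = blockS x (fun _ => 1)) ∧
    (Odd x → ∃ W : Matrix (Fin x) (Fin x) ℤ, W.det = 1 ∧
        W * Mmat x * W.transpose = blockS x (fun _ => 1)) :=
  Mmat_canonical_form_general x
end
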